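/- arXiv:2310.15242 — 3 statements merged into one kernel-verified Lean document; each statement's English description precedes it below -/
import Mathlib

section
/- Let Γ and Π be connected graphs and let ψ be a (λ,ε)-quasi-isometric embedding of the vertex set of Γ into the vertex set of Π. Then there exists a connected subgraph Λ of Π whose vertex set contains ψ(V(Γ)) such that: (i) ψ, regarded as a map from V(Γ) to V(Λ) with Λ carrying its intrinsic graph metric, is a quasi-isometry; (ii) the inclusion of V(Λ) into V(Π) is a quasi-isometric embedding; and (iii) if Γ has bounded valence then so does Λ. -/
open SimpleGraph

namespace Paper

variable {V W : Type*}

/-- Locally finite graph: every vertex has finite degree. -/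
def LocFin (G : SimpleGraph V) : Prop := ∀ v : V, (G.neighborSet v).Finite

/-- All vertex degrees are at most `d`. -/
def DegLe (G : SimpleGraph V) (d : ℕ) : Prop :=
  ∀ v : V, (G.neighborSet v).Finite ∧ (G.neighborSet v).ncard ≤ d

/-- Bounded valence. -/
def BddVal (G : SimpleGraph V) : Prop := ∃ d : ℕ, DegLe G d

/-- `(l, e)`-quasi-isometric embedding between the vertex sets of two graphs. -/
def IsQIE (G : SimpleGraph V) (H : SimpleGraph W) (l e : ℝ) (f : V → W) : Prop :=
  ∀ x y : V,
    (G.dist x y : ℝ) / l - e ≤ (H.dist (f x) (f y) : ℝ) ∧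
      (H.dist (f x) (f y) : ℝ) ≤ l * (G.dist x y : ℝ) + e

/-- Coarse surjectivity: every vertex of the target lies within distance `e` of the image. -/
def CoarseSurj (H : SimpleGraph W) (e : ℝ) (f : V → W) : Prop :=
  ∀ w : W, ∃ x : V, (H.dist w (f x) : ℝ) ≤ e

/-- `(l, e)`-quasi-isometry. -/
def IsQI (G : SimpleGraph V) (H : SimpleGraph W) (l e : ℝ) (f : V → W) : Prop :=
  IsQIE G H l e f ∧ CoarseSurj H e f

/-- `g` is an `h`-quasi-inverse of `f`. -/
def IsQInv (G : SimpleGraph V) (h : ℝ) (f : V → W) (g : W → V) : Prop :=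
  ∀ x : V, (G.dist (g (f x)) x : ℝ) ≤ h

/-- Reachability by a walk all of whose vertices avoid the set `S`. -/
def ReachOut (G : SimpleGraph V) (S : Set V) (a b : V) : Prop :=
  ∃ w : G.Walk a b, ∀ v ∈ w.support, v ∉ S

/-- A one-way infinite simple ray. -/
def RayIn (G : SimpleGraph V) (r : ℕ → V) : Prop :=
  Function.Injective r ∧ ∀ n : ℕ, G.Adj (r n) (r (n + 1))

/-- End-equivalence of rays: for every finite vertex set they have tails in the same
connected component of the graph with that set deleted. -/
def EndEquiv (G : SimpleGraph V) (r₁ r₂ : ℕ → V) : Prop :=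
  ∀ S : Set V, S.Finite → ∃ N : ℕ, ∀ m n : ℕ, N ≤ m → N ≤ n → ReachOut G S (r₁ m) (r₂ n)

/-- Two points (encoded as sequences: a constant sequence for a vertex, a ray for an end)
lie in distinct connected components of `G` with the vertex set `S` deleted. -/
def SepComps (G : SimpleGraph V) (S : Set V) (a b : ℕ → V) : Prop :=
  ∃ N : ℕ,
    (∀ m n : ℕ, N ≤ m → N ≤ n → ReachOut G S (a m) (a n)) ∧
    (∀ m n : ℕ, N ≤ m → N ≤ n → ReachOut G S (b m) (b n)) ∧
    (∀ m n : ℕ, N ≤ m → N ≤ n → ¬ ReachOut G S (a m) (b n))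

/-- `vs(G) ≥ N`: any vertex set separating two ends has at least `N` elements. -/
def VsGe (G : SimpleGraph V) (N : ℕ) : Prop :=
  ∀ r₁ r₂ : ℕ → V, RayIn G r₁ → RayIn G r₂ →
    ∀ S : Set V, S.Finite → SepComps G S r₁ r₂ → N ≤ S.ncard

/-- `vs(G) ≥ c` for a real threshold `c`. -/
def VsGeR (G : SimpleGraph V) (c : ℝ) : Prop :=
  ∀ r₁ r₂ : ℕ → V, RayIn G r₁ → RayIn G r₂ →
    ∀ S : Set V, S.Finite → SepComps G S r₁ r₂ → c ≤ (S.ncard : ℝ)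

/-- `U` is a connected component of `G` with the vertex set `A` deleted. -/
def IsCompOut (G : SimpleGraph V) (A U : Set V) : Prop :=
  ∃ a ∈ U, ∀ b : V, ReachOut G A a b ↔ b ∈ U

/-- The edge coboundary `δb` of a vertex set `b`. -/
def cob (G : SimpleGraph V) (b : Set V) : Set (Sym2 V) :=
  {e | ∃ x y : V, e = s(x, y) ∧ G.Adj x y ∧ x ∈ b ∧ y ∉ b}

/-- Membership in the Boolean ring `𝓑G` of vertex sets with finite coboundary. -/
def MemBX (G : SimpleGraph V) (b : Set V) : Prop := (cob G b).Finite

/-- The set of endpoints of the edges of `δb`. -/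
def cobVerts (G : SimpleGraph V) (b : Set V) : Set V :=
  {v | ∃ w : V, s(v, w) ∈ cob G b}

/-- A tight element: both sides induce connected subgraphs. -/
def Tight (G : SimpleGraph V) (b : Set V) : Prop :=
  (G.induce b).Connected ∧ (G.induce bᶜ).Connected

/-- Vertices of `A` that are endpoints of an edge with the other endpoint in `U`. -/
def AttachSet (G : SimpleGraph V) (A U : Set V) : Set V :=
  {v | v ∈ A ∧ ∃ u ∈ U, G.Adj v u}

/-- `incut(A) ≤ k` for a vertex set `A`, with the intrinsic metric of `G.induce A`. -/
def IncutBddSet (G : SimpleGraph V) (A : Set V) (k : ℕ) : Prop :=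
  ∀ U : Set V, IsCompOut G A U →
    ∀ v w : A, (v : V) ∈ AttachSet G A U → (w : V) ∈ AttachSet G A U →
      (G.induce A).dist v w ≤ k

/-- `outcut(A) ≤ k` for a vertex set `A`. -/
def OutcutBddSet (G : SimpleGraph V) (A : Set V) (k : ℕ) : Prop :=
  ∀ U : Set V, IsCompOut G A U → IncutBddSet G U k

/-- Uniform coboundary for a vertex set. -/
def UnifCobSet (G : SimpleGraph V) (A : Set V) : Prop :=
  (∃ k : ℕ, IncutBddSet G A k) ∧ (∃ k : ℕ, OutcutBddSet G A k)

/-- `incut(L) ≤ k` for a subgraph `L`, with its own intrinsic metric. -/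
def IncutBddSub (G : SimpleGraph V) (L : G.Subgraph) (k : ℕ) : Prop :=
  ∀ U : Set V, IsCompOut G L.verts U →
    ∀ v w : L.verts, (v : V) ∈ AttachSet G L.verts U → (w : V) ∈ AttachSet G L.verts U →
      L.coe.dist v w ≤ k

/-- `outcut(L) ≤ k` for a subgraph `L`. -/
def OutcutBddSub (G : SimpleGraph V) (L : G.Subgraph) (k : ℕ) : Prop :=
  ∀ U : Set V, IsCompOut G L.verts U → IncutBddSet G U k

/-- Uniform coboundary for a subgraph. -/
def UnifCobSub (G : SimpleGraph V) (L : G.Subgraph) : Prop :=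
  (∃ k : ℕ, IncutBddSub G L k) ∧ (∃ k : ℕ, OutcutBddSub G L k)

/-- Quasi-transitive graph: the automorphism group has finitely many orbits of vertices. -/
def QuasiTransitive (G : SimpleGraph V) : Prop :=
  ∃ F : Set V, F.Finite ∧ ∀ v : V, ∃ e : G ≃g G, ∃ w ∈ F, e w = v

/-- Hausdorff distance between two vertex sets is at most `r`. -/
def HausBdd (G : SimpleGraph V) (A B : Set V) (r : ℝ) : Prop :=
  (∀ a ∈ A, ∃ b ∈ B, (G.dist a b : ℝ) ≤ r) ∧ (∀ b ∈ B, ∃ a ∈ A, (G.dist a b : ℝ) ≤ r)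

/-- Reachability by a walk avoiding the edge set `F`. -/
def ReachAvoidE (G : SimpleGraph V) (F : Set (Sym2 V)) (a b : V) : Prop :=
  ∃ w : G.Walk a b, ∀ e ∈ w.edges, e ∉ F

/-- The ends of the rays `r₁`, `r₂` are separated by deleting the edge set `F`. -/
def SepEnds (G : SimpleGraph V) (F : Set (Sym2 V)) (r₁ r₂ : ℕ → V) : Prop :=
  ∃ N : ℕ, ∀ m n : ℕ, N ≤ m → N ≤ n → ¬ ReachAvoidE G F (r₁ m) (r₂ n)

/-- Accessibility: some `k ≥ 1` such that any two distinct ends can be separated by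
deleting at most `k` edges. -/
def Accessible (G : SimpleGraph V) : Prop :=
  ∃ k : ℕ, 1 ≤ k ∧ ∀ r₁ r₂ : ℕ → V, RayIn G r₁ → RayIn G r₂ → ¬ EndEquiv G r₁ r₂ →
    ∃ F : Set (Sym2 V), F.Finite ∧ F.ncard ≤ k ∧ SepEnds G F r₁ r₂

/-- `l`-quasi-action of a group on the vertex set of a graph. -/
def IsQAct {G₀ : Type*} [Group G₀] (G : SimpleGraph V) (l : ℝ) (φ : G₀ → V → V) : Prop :=
  (∀ g : G₀, IsQI G G l l (φ g)) ∧
  (∀ (g h : G₀) (x : V), (G.dist (φ (g * h) x) (φ g (φ h x)) : ℝ) ≤ l) ∧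
  (∀ g : G₀, IsQInv G l (φ g) (φ g⁻¹) ∧ IsQInv G l (φ g⁻¹) (φ g))

/-- `B`-cobounded quasi-action. -/
def Cobdd {G₀ : Type*} [Group G₀] (G : SimpleGraph V) (B : ℝ) (φ : G₀ → V → V) : Prop :=
  ∀ x y : V, ∃ g : G₀, (G.dist x (φ g y) : ℝ) ≤ B

/-- The diameter (in `ℕ`) of a vertex set. -/
noncomputable def setDiam (G : SimpleGraph V) (S : Set V) : ℕ :=
  sSup {d : ℕ | ∃ x ∈ S, ∃ y ∈ S, G.dist x y = d}

/-- 2-connected: connected, at least three vertices, and deleting any single vertex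
leaves it connected. -/
def TwoConnected (G : SimpleGraph V) : Prop :=
  G.Connected ∧ (∃ a b c : V, a ≠ b ∧ a ≠ c ∧ b ≠ c) ∧
    ∀ v : V, (G.induce {w : V | w ≠ v}).Connected

/-- Tree decomposition. -/
def IsTreeDecomp {VT : Type*} (X : SimpleGraph V) (T : SimpleGraph VT) (B : VT → Set V) :
    Prop :=
  T.IsTree ∧ (∀ x : V, ∃ u : VT, x ∈ B u) ∧
    ∀ u v w : VT, (∃ p : T.Walk u w, p.IsPath ∧ v ∈ p.support) → B u ∩ B w ⊆ B v

/-- Bounded adhesion. -/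
def BddAdhesion {VT : Type*} (T : SimpleGraph VT) (B : VT → Set V) : Prop :=
  ∃ N : ℕ, ∀ u w : VT, T.Adj u w → (B u ∩ B w).Finite ∧ (B u ∩ B w).ncard ≤ N

/-- Connected parts. -/
def ConnParts {VT : Type*} (X : SimpleGraph V) (B : VT → Set V) : Prop :=
  ∀ u : VT, (X.induce (B u)).Connected

/-- Replacing each bag by its closed `r`-neighbourhood. -/
def ballBag {VT : Type*} (X : SimpleGraph V) (B : VT → Set V) (r : ℕ) : VT → Set V :=
  fun u => {x : V | ∃ y ∈ B u, X.dist x y ≤ r}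

/-- A point of `G` which is either a vertex lying outside `B(S;R)` (encoded as a constant
sequence) or an end (encoded as a ray representing it). -/
def PtSeq (G : SimpleGraph V) (S : Set V) (R : ℝ) (a : ℕ → V) : Prop :=
  (∃ v : V, a = Function.const ℕ v ∧ ∀ s ∈ S, R < (G.dist v s : ℝ)) ∨ RayIn G a

/-- A subring of `𝓑G`: contains `∅`, and is closed under intersection and
symmetric difference. -/
def IsSubring (G : SimpleGraph V) (R : Set (Set V)) : Prop :=
  (∀ b ∈ R, MemBX G b) ∧ ∅ ∈ R ∧
    (∀ a ∈ R, ∀ b ∈ R, a ∩ b ∈ R) ∧ (∀ a ∈ R, ∀ b ∈ R, symmDiff a b ∈ R)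

/-- The subring generated by a family. -/
def genSubring (G : SimpleGraph V) (E : Set (Set V)) : Set (Set V) :=
  ⋂₀ {R : Set (Set V) | IsSubring G R ∧ E ⊆ R}

/-- Two vertex sets are nested. -/
def Nested (a b : Set V) : Prop :=
  a ∩ b = ∅ ∨ a ∩ bᶜ = ∅ ∨ aᶜ ∩ b = ∅ ∨ aᶜ ∩ bᶜ = ∅

/-- A nested family: closed under complementation and pairwise nested. -/
def NestedFam (E : Set (Set V)) : Prop :=
  (∀ b ∈ E, bᶜ ∈ E) ∧ ∀ a ∈ E, ∀ b ∈ E, Nested a b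

/-- A `G₀`-invariant family of vertex sets. -/
def GInvFam (G₀ : Type*) [Group G₀] [MulAction G₀ V] (E : Set (Set V)) : Prop :=
  ∀ g : G₀, ∀ b ∈ E, (fun x => g • x) '' b ∈ E

/-- A `G₀`-finite family of vertex sets: it meets only finitely many orbits. -/
def GFinFam (G₀ : Type*) [Group G₀] [MulAction G₀ V] (E : Set (Set V)) : Prop :=
  ∃ F : Set (Set V), F.Finite ∧ F ⊆ E ∧
    ∀ b ∈ E, ∃ g : G₀, ∃ c ∈ F, (fun x => g • x) '' c = b

/-- `g` stabilises the subgraph `L` setwise. -/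
def StabSub {G₀ : Type*} [Group G₀] [MulAction G₀ V] (G : SimpleGraph V) (g : G₀)
    (L : G.Subgraph) : Prop :=
  (∀ v : V, v ∈ L.verts ↔ g • v ∈ L.verts) ∧
    (∀ a b : V, L.Adj a b ↔ L.Adj (g • a) (g • b))

end Paper

/-!
Take for `Λ` the union of chosen geodesics from `ψ x` to `ψ y` over all edges `xy` of `Γ`. Each has
length at most `n = ⌈λ + ε⌉`, so `ψ : Γ → Λ` is `n`-Lipschitz and every vertex of `Λ` lies within
`n` of the image of `ψ`. Since `dist_Π ≤ dist_Λ`, the lower bound for `ψ` passes to `Λ`; together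
with coarse surjectivity this also makes the inclusion `Λ → Π` a quasi-isometric embedding.
If the degrees of `Γ` are at most `d`, the geodesics through a vertex `v` of `Λ` start at points
`ψ x` with `dist_Π (ψ x, v) ≤ n`; these `x` lie in one `Γ`-ball of radius `⌈λ (2n + ε)⌉`, and
each contributes at most `(d + 1)(n + 1)` neighbours of `v`.
-/

namespace Set

variable {ι α : Type*}

theorem encard_biUnion_le_mul {t : Set ι} {s : ι → Set α} {k : ℕ∞}
    (h : ∀ i ∈ t, (s i).encard ≤ k) : (⋃ i ∈ t, s i).encard ≤ t.encard * k := by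
  rcases t.finite_or_infinite with ht | ht
  · calc (⋃ i ∈ t, s i).encard ≤ ∑ i ∈ ht.toFinset, (s i).encard := by
          simpa using ht.toFinset.set_encard_biUnion_le s
      _ ≤ ht.toFinset.card • k := Finset.sum_le_card_nsmul _ _ _ (by simpa using h)
      _ = t.encard * k := by rw [nsmul_eq_mul, ht.encard_eq_coe_toFinset_card]
  · rcases eq_or_ne k 0 with rfl | hk
    · have : ∀ i ∈ t, s i = ∅ := fun i hi => encard_eq_zero.1 (nonpos_iff_eq_zero.1 (h i hi))
      simpa using this
    · simp [ht.encard_eq, ENat.top_mul hk]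

end Set

namespace SimpleGraph

variable {V W : Type*} {G : SimpleGraph V}

theorem Hom.dist_le {G' : SimpleGraph W} (f : G →g G') {u v : V} (h : G.Reachable u v) :
    G'.dist (f u) (f v) ≤ G.dist u v := by
  obtain ⟨p, hp⟩ := h.exists_walk_length_eq_dist
  exact hp ▸ (SimpleGraph.dist_le (p.map f)).trans_eq (Walk.length_map f p)

theorem Walk.exists_walk_length_le_mul {K : SimpleGraph W} {f : V → W} {n : ℕ}
    (hf : ∀ x y, G.Adj x y → ∃ q : K.Walk (f x) (f y), q.length ≤ n) {x y : V} :
    ∀ w : G.Walk x y, ∃ q : K.Walk (f x) (f y), q.length ≤ n * w.length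
  | .nil => ⟨.nil, by simp⟩
  | .cons h w => by
    obtain ⟨q₁, hq₁⟩ := hf _ _ h
    obtain ⟨q₂, hq₂⟩ := w.exists_walk_length_le_mul hf
    exact ⟨q₁.append q₂, by rw [Walk.length_append, Walk.length_cons]; nlinarith⟩

theorem encard_ball_le_pow {d : ℕ∞} (hd : ∀ v, (G.neighborSet v).encard ≤ d) (c : V) :
    ∀ r : ℕ, (G.ball c (r + 1)).encard ≤ (d + 1) ^ r
  | 0 => by simp
  | r + 1 => by
    have hsub :
        G.ball c (↑(r + 1) + 1) ⊆ ⋃ z ∈ G.ball c (r + 1), insert z (G.neighborSet z) := by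
      intro v hv
      rw [mem_ball, Nat.cast_succ, ENat.lt_add_one_iff (by simp)] at hv
      rcases hv.lt_or_eq with hlt | heq
      · exact Set.mem_biUnion (x := v) hlt (Set.mem_insert _ _)
      · obtain ⟨w, hw⟩ := exists_walk_of_edist_eq_coe (heq.trans (by norm_cast))
        cases w with
        | nil => simp at hw
        | cons h q =>
          refine Set.mem_biUnion (x := _) ?_ (Set.mem_insert_of_mem _ h.symm)
          rw [mem_ball, ENat.lt_add_one_iff (by simp)]
          exact (edist_le q).trans (by simp_all)
    calc (G.ball c (↑(r + 1) + 1)).encard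
        ≤ (G.ball c (r + 1)).encard * (d + 1) :=
          (Set.encard_mono hsub).trans (Set.encard_biUnion_le_mul fun z _ =>
            (Set.encard_insert_le _ _).trans (by gcongr; exact hd z))
      _ ≤ (d + 1) ^ r * (d + 1) := by gcongr; exact encard_ball_le_pow hd c r
      _ = (d + 1) ^ (r + 1) := (pow_succ _ _).symm

theorem Walk.toSubgraph_dropUntil_le [DecidableEq V] {u v w : V} (p : G.Walk u v)
    (h : w ∈ p.support) : (p.dropUntil w h).toSubgraph ≤ p.toSubgraph := by
  conv_rhs => rw [← p.take_spec h, Walk.toSubgraph_append]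
  exact le_sup_right

theorem Walk.exists_walk_coe_length_eq {L : G.Subgraph} {u v : V} (p : G.Walk u v)
    (hp : p.toSubgraph ≤ L) :
    ∃ q : L.coe.Walk ⟨u, hp.1 p.start_mem_verts_toSubgraph⟩ ⟨v, hp.1 p.end_mem_verts_toSubgraph⟩,
      q.length = p.length :=
  ⟨p.mapToSubgraph.map (Subgraph.inclusion hp), (Walk.length_map _ _).trans <|
    (Walk.length_map _ _).symm.trans (congrArg Walk.length p.map_mapToSubgraph_hom)⟩

theorem Subgraph.encard_coe_neighborSet (L : G.Subgraph) (v : L.verts) :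
    (L.coe.neighborSet v).encard = (L.neighborSet v).encard :=
  Set.encard_congr (L.coeNeighborSetEquiv v)

theorem Walk.encard_setOf_mem_support_le {u v : V} (q : G.Walk u v) :
    {w | w ∈ q.support}.encard ≤ q.length + 1 := by
  classical
  rw [← List.coe_toFinset, Set.encard_coe_eq_coe_finsetCard]
  exact_mod_cast q.length_support ▸ List.toFinset_card_le q.support

section walkUnion

/-- The diagonal pairs `x = y` put every `ψ x` into the subgraph, also when `G` has no edges. -/
def walkUnion (G : SimpleGraph V) {H : SimpleGraph W} {ψ : V → W}
    (p : ∀ x y, H.Walk (ψ x) (ψ y)) : H.Subgraph :=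
  ⨆ (x) (y) (_ : x = y ∨ G.Adj x y), (p x y).toSubgraph

variable {H : SimpleGraph W} {ψ : V → W} (p : ∀ x y, H.Walk (ψ x) (ψ y))

theorem toSubgraph_le_walkUnion {x y : V} (h : x = y ∨ G.Adj x y) :
    (p x y).toSubgraph ≤ G.walkUnion p :=
  le_iSup₂_of_le x y (le_iSup_of_le h le_rfl)

theorem mem_walkUnion_verts (x : V) : ψ x ∈ (G.walkUnion p).verts :=
  (toSubgraph_le_walkUnion p (.inl rfl)).1 (p x x).start_mem_verts_toSubgraph

theorem mem_walkUnion_verts_iff {v : W} :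
    v ∈ (G.walkUnion p).verts ↔ ∃ x y, (x = y ∨ G.Adj x y) ∧ v ∈ (p x y).support := by
  simp [walkUnion]

theorem walkUnion_adj {a b : W} :
    (G.walkUnion p).Adj a b ↔ ∃ x y, (x = y ∨ G.Adj x y) ∧ (p x y).toSubgraph.Adj a b := by
  simp [walkUnion]

variable {p} {n : ℕ} (hp : ∀ x y, (x = y ∨ G.Adj x y) → (p x y).length ≤ n)
include hp

theorem exists_walkUnion_walk_length_le {x y : V} (w : G.Walk x y) :
    ∃ q : (G.walkUnion p).coe.Walk ⟨ψ x, mem_walkUnion_verts p x⟩ ⟨ψ y, mem_walkUnion_verts p y⟩,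
      q.length ≤ n * w.length :=
  w.exists_walk_length_le_mul
    (f := fun x => (⟨ψ x, mem_walkUnion_verts p x⟩ : (G.walkUnion p).verts)) fun x y h => by
    obtain ⟨q, hq⟩ := (p x y).exists_walk_coe_length_eq (toSubgraph_le_walkUnion p (.inr h))
    exact ⟨q, hq ▸ hp x y (.inr h)⟩

theorem exists_walkUnion_walk_to_image (v : (G.walkUnion p).verts) :
    ∃ y, ∃ q : (G.walkUnion p).coe.Walk v ⟨ψ y, mem_walkUnion_verts p y⟩, q.length ≤ n := by
  classical
  obtain ⟨x, y, hxy, hv⟩ := (mem_walkUnion_verts_iff p).1 v.2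
  obtain ⟨q, hq⟩ := ((p x y).dropUntil _ hv).exists_walk_coe_length_eq
    (((p x y).toSubgraph_dropUntil_le hv).trans (toSubgraph_le_walkUnion p hxy))
  exact ⟨y, q, hq ▸ ((p x y).length_dropUntil_le_length hv).trans (hp x y hxy)⟩

theorem walkUnion_connected (hG : G.Connected) : (G.walkUnion p).coe.Connected := by
  obtain ⟨x₀⟩ := hG.nonempty
  rw [connected_iff_exists_forall_reachable]
  refine ⟨⟨ψ x₀, mem_walkUnion_verts p x₀⟩, fun v => ?_⟩
  obtain ⟨y, q, -⟩ := exists_walkUnion_walk_to_image hp v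
  obtain ⟨q', -⟩ := exists_walkUnion_walk_length_le hp (hG.preconnected x₀ y).some
  exact q'.reachable.trans q.reachable.symm

theorem encard_neighborSet_walkUnion_le {d M : ℕ∞} (hd : ∀ x, (G.neighborSet x).encard ≤ d)
    (hM : ∀ v, {x | H.dist (ψ x) v ≤ n}.encard ≤ M) (v : W) :
    ((G.walkUnion p).neighborSet v).encard ≤ M * ((d + 1) * (n + 1)) := by
  classical
  have hsub : (G.walkUnion p).neighborSet v ⊆ ⋃ x ∈ {x | H.dist (ψ x) v ≤ n},
      ⋃ y ∈ insert x (G.neighborSet x), {w | w ∈ (p x y).support} := by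
    intro b hb
    obtain ⟨x, y, hxy, hadj⟩ := (walkUnion_adj p).1 hb
    have hv : v ∈ (p x y).support := Walk.mem_support_of_adj_toSubgraph hadj
    have hx : H.dist (ψ x) v ≤ n :=
      (dist_le _).trans (((p x y).length_takeUntil_le_length hv).trans (hp x y hxy))
    refine Set.mem_biUnion hx (Set.mem_biUnion ?_ (Walk.mem_support_of_adj_toSubgraph hadj.symm))
    rcases hxy with rfl | h
    exacts [Set.mem_insert _ _, Set.mem_insert_of_mem _ h]
  calc ((G.walkUnion p).neighborSet v).encard
      ≤ {x | H.dist (ψ x) v ≤ n}.encard * ((d + 1) * (n + 1)) :=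
        (Set.encard_mono hsub).trans <| Set.encard_biUnion_le_mul fun x _ =>
          (Set.encard_biUnion_le_mul (k := n + 1) fun y hy =>
            (p x y).encard_setOf_mem_support_le.trans
              (by gcongr; exact hp x y (hy.imp Eq.symm id))).trans
          (by gcongr; exact (Set.encard_insert_le _ _).trans (by gcongr; exact hd x))
    _ ≤ M * ((d + 1) * (n + 1)) := by gcongr; exact hM v

end walkUnion

end SimpleGraph

namespace Paper

variable {V U W : Type*} {G : SimpleGraph V} {H : SimpleGraph W} {l e : ℝ}

theorem degLe_iff_encard_le {d : ℕ} : DegLe G d ↔ ∀ v, (G.neighborSet v).encard ≤ d := by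
  simp only [DegLe, Set.encard_le_coe_iff_finite_ncard_le]

theorem isQIE_iff (hl : 0 < l) {f : V → W} :
    IsQIE G H l e f ↔ ∀ x y, (G.dist x y : ℝ) ≤ l * (H.dist (f x) (f y) + e) ∧
      (H.dist (f x) (f y) : ℝ) ≤ l * G.dist x y + e := by
  refine forall₂_congr fun x y => and_congr_left' ?_
  rw [sub_le_iff_le_add, div_le_iff₀ hl, mul_comm]

theorem IsQIE.encard_setOf_dist_le {ψ : V → W} (hψ : IsQIE G H l e ψ) (hl : 0 < l)
    (hG : G.Connected) (hH : H.Connected) {d : ℕ∞} (hd : ∀ x, (G.neighborSet x).encard ≤ d)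
    (v : W) (r : ℕ) : {x | H.dist (ψ x) v ≤ r}.encard ≤ (d + 1) ^ ⌈l * (2 * r + e)⌉₊ := by
  rcases Set.eq_empty_or_nonempty {x | H.dist (ψ x) v ≤ r} with h | ⟨x₁, hx₁⟩
  · simp [h]
  refine (Set.encard_mono fun x (hx : H.dist (ψ x) v ≤ r) => ?_).trans
    (encard_ball_le_pow hd x₁ _)
  have hx₁ : H.dist (ψ x₁) v ≤ r := hx₁
  have hHx : (H.dist (ψ x) (ψ x₁) : ℝ) ≤ 2 * r := by
    have := hH.dist_triangle (u := ψ x) (v := v) (w := ψ x₁)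
    rw [dist_comm (u := v)] at this
    exact_mod_cast (by omega : H.dist (ψ x) (ψ x₁) ≤ 2 * r)
  have hGx : (G.dist x x₁ : ℝ) ≤ ⌈l * (2 * r + e)⌉₊ :=
    calc (G.dist x x₁ : ℝ) ≤ l * (H.dist (ψ x) (ψ x₁) + e) := ((isQIE_iff hl).1 hψ x x₁).1
      _ ≤ l * (2 * r + e) := by gcongr
      _ ≤ ⌈l * (2 * r + e)⌉₊ := Nat.le_ceil _
  rw [mem_ball, ← (hG.preconnected x x₁).coe_dist_eq_edist, ENat.lt_add_one_iff (by simp)]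
  exact_mod_cast hGx

section comp

variable {Λ : SimpleGraph U} {f : V → U} {ι : U → W} {n : ℕ}

theorem isQI_of_isQIE_comp (hl : 0 < l) (he : 0 ≤ e) (hψ : IsQIE G H l e (ι ∘ f))
    (hι : ∀ u v, H.dist (ι u) (ι v) ≤ Λ.dist u v)
    (hf : ∀ x y, Λ.dist (f x) (f y) ≤ n * G.dist x y) (hsurj : ∀ u, ∃ x, Λ.dist u (f x) ≤ n) :
    IsQI G Λ (l + n) (e + n) f := by
  refine ⟨(isQIE_iff (by positivity)).2 fun x y => ?_, fun u => ?_⟩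
  · have hlow : (G.dist x y : ℝ) ≤ l * (H.dist (ι (f x)) (ι (f y)) + e) :=
      ((isQIE_iff hl).1 hψ x y).1
    have hι' : (H.dist (ι (f x)) (ι (f y)) : ℝ) ≤ Λ.dist (f x) (f y) := by
      exact_mod_cast hι _ _
    have hf' : (Λ.dist (f x) (f y) : ℝ) ≤ n * G.dist x y := by exact_mod_cast hf x y
    constructor
    · nlinarith [(Λ.dist (f x) (f y)).cast_nonneg (α := ℝ), n.cast_nonneg (α := ℝ)]
    · nlinarith [(G.dist x y).cast_nonneg (α := ℝ)]
  · obtain ⟨x, hx⟩ := hsurj u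
    have : (Λ.dist u (f x) : ℝ) ≤ n := by exact_mod_cast hx
    exact ⟨x, by linarith⟩

theorem isQIE_of_isQIE_comp (hΛ : Λ.Connected) (hH : H.Connected) (hl : 0 < l) (he : 0 ≤ e)
    (hψ : IsQIE G H l e (ι ∘ f)) (hι : ∀ u v, H.dist (ι u) (ι v) ≤ Λ.dist u v)
    (hf : ∀ x y, Λ.dist (f x) (f y) ≤ n * G.dist x y) (hsurj : ∀ u, ∃ x, Λ.dist u (f x) ≤ n) :
    IsQIE Λ H (n * l + 1) (2 * n + n * l * (2 * n + e)) ι := by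
  refine (isQIE_iff (by positivity)).2 fun u v => ?_
  obtain ⟨x, hx⟩ := hsurj u
  obtain ⟨y, hy⟩ := hsurj v
  have hΛuv : (Λ.dist u v : ℝ) ≤ 2 * n + n * G.dist x y := by
    have h₁ := hΛ.dist_triangle (u := u) (v := f x) (w := v)
    have h₂ := hΛ.dist_triangle (u := f x) (v := f y) (w := v)
    have := hf x y
    rw [dist_comm (u := f y)] at h₂
    exact_mod_cast (by nlinarith : Λ.dist u v ≤ 2 * n + n * G.dist x y)
  have hHxy : (H.dist (ι (f x)) (ι (f y)) : ℝ) ≤ H.dist (ι u) (ι v) + 2 * n := by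
    have h₁ := hH.dist_triangle (u := ι (f x)) (v := ι u) (w := ι (f y))
    have h₂ := hH.dist_triangle (u := ι u) (v := ι v) (w := ι (f y))
    have h₃ : H.dist (ι (f x)) (ι u) ≤ n := (hι _ _).trans (dist_comm.trans_le hx)
    have h₄ : H.dist (ι v) (ι (f y)) ≤ n := (hι _ _).trans hy
    exact_mod_cast (by omega : H.dist (ι (f x)) (ι (f y)) ≤ H.dist (ι u) (ι v) + 2 * n)
  have hGxy : (G.dist x y : ℝ) ≤ l * (H.dist (ι (f x)) (ι (f y)) + e) :=
    ((isQIE_iff hl).1 hψ x y).1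
  have hHuv : (H.dist (ι u) (ι v) : ℝ) ≤ Λ.dist u v := by exact_mod_cast hι u v
  have hnl : (0 : ℝ) ≤ n * l := by positivity
  have hΛ' :
      (Λ.dist u v : ℝ) ≤ n * l * H.dist (ι u) (ι v) + (2 * n + n * l * (2 * n + e)) := by
    nlinarith [mul_le_mul_of_nonneg_left hGxy n.cast_nonneg, mul_le_mul_of_nonneg_left hHxy hnl]
  have hE : (0 : ℝ) ≤ 2 * n + n * l * (2 * n + e) := by positivity
  constructor
  · nlinarith [(H.dist (ι u) (ι v)).cast_nonneg (α := ℝ), mul_nonneg hnl hE]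
  · nlinarith [(Λ.dist u v).cast_nonneg (α := ℝ), mul_nonneg n.cast_nonneg hl.le]

end comp

end Paper

open Paper in
theorem stmt0 {V W : Type*} (G : SimpleGraph V) (H : SimpleGraph W)
    (hG : G.Connected) (hH : H.Connected)
    (l e : ℝ) (hl : 1 ≤ l) (he : 0 ≤ e)
    (ψ : V → W) (hψ : IsQIE G H l e ψ) :
    ∃ L : H.Subgraph, L.coe.Connected ∧ (∀ x : V, ψ x ∈ L.verts) ∧
      (∃ (l' e' : ℝ) (f : V → L.verts), 1 ≤ l' ∧ 0 ≤ e' ∧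
        (∀ x : V, (f x : W) = ψ x) ∧ IsQI G L.coe l' e' f) ∧
      (∃ l' e' : ℝ, 1 ≤ l' ∧ 0 ≤ e' ∧
        IsQIE L.coe H l' e' (fun v => (v : W))) ∧
      (BddVal G → BddVal L.coe) := by
  have hl₀ : 0 < l := by linarith
  choose p hp using fun x y => hH.exists_walk_length_eq_dist (ψ x) (ψ y)
  set n := ⌈l + e⌉₊
  have hpn : ∀ x y, (x = y ∨ G.Adj x y) → (p x y).length ≤ n := by
    rintro x y hxy
    have hdist : (G.dist x y : ℝ) ≤ 1 := by
      rcases hxy with rfl | h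
      · simp
      · simp [dist_eq_one_iff_adj.2 h]
    have := ((isQIE_iff hl₀).1 hψ x y).2
    rw [hp, ← Nat.cast_le (α := ℝ)]
    nlinarith [Nat.le_ceil (l + e)]
  set L := G.walkUnion p
  have hL := walkUnion_connected hpn hG
  set f : V → L.verts := fun x => ⟨ψ x, mem_walkUnion_verts p x⟩
  have hι : ∀ u v : L.verts, H.dist u v ≤ L.coe.dist u v :=
    fun u v => L.hom.dist_le (hL.preconnected u v)
  have hf : ∀ x y, L.coe.dist (f x) (f y) ≤ n * G.dist x y := fun x y => by
    obtain ⟨w, hw⟩ := hG.exists_walk_length_eq_dist x y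
    obtain ⟨q, hq⟩ := exists_walkUnion_walk_length_le hpn w
    exact (dist_le q).trans (hw ▸ hq)
  have hsurj : ∀ u, ∃ x, L.coe.dist u (f x) ≤ n := fun u => by
    obtain ⟨y, q, hq⟩ := exists_walkUnion_walk_to_image hpn u
    exact ⟨y, (dist_le q).trans hq⟩
  refine ⟨L, hL, mem_walkUnion_verts p,
    ⟨l + n, e + n, f, le_add_of_le_of_nonneg hl n.cast_nonneg, by positivity, fun _ => rfl,
      isQI_of_isQIE_comp (ι := Subtype.val) hl₀ he hψ hι hf hsurj⟩,
    ⟨n * l + 1, 2 * n + n * l * (2 * n + e), le_add_of_nonneg_left (by positivity), by positivity,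
      isQIE_of_isQIE_comp (ι := Subtype.val) hL hH hl₀ he hψ hι hf hsurj⟩, ?_⟩
  rintro ⟨d, hd⟩
  rw [degLe_iff_encard_le] at hd
  refine ⟨(d + 1) ^ ⌈l * (2 * n + e)⌉₊ * ((d + 1) * (n + 1)), degLe_iff_encard_le.2 fun v => ?_⟩
  rw [Subgraph.encard_coe_neighborSet]
  push_cast
  exact encard_neighborSet_walkUnion_le hpn hd (hψ.encard_setOf_dist_le hl₀ hG hH hd · n) v
end

section
/- Let Γ be a connected, locally finite graph equipped with a B-cobounded λ-quasi-action of a group G. Then there exists a constant C ≥ 1 (depending only on λ, B and Γ) such that: for every finite nonempty vertex set S ⊆ V(Γ) and every finite connected component Z of Γ with S deleted, every vertex z of Z satisfies dist_Γ(z, S) < C·diam_Γ(S) + C. -/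
open SimpleGraph

/-!
Let `z'` be a deepest point of a finite component `Z` of `Γ - S`. Coboundedness gives a
quasi-isometry `f = φ g` moving `S` next to `z'`. If `z'` were deep compared with `diam S`, the
neighbourhood `T` of `f '' S` would lie in `Z`, far from `S`. The quasi-inverse maps everything
that `f z'` reaches while avoiding `T` into `Z`, so that region is finite; as `Γ` is infinite it
cannot reach `S`, since it would then contain all of `Γ - Z`. Hence a geodesic from `f z'` to `S`
crosses `T` inside `Z`, which makes `f z'` a point of `Z` deeper than `z'`.
-/

namespace Paper

variable {V W : Type*} {Γ : SimpleGraph V}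

def closedNbhd (Γ : SimpleGraph V) (A : Set V) (r : ℝ) : Set V :=
  {v | ∃ a ∈ A, (Γ.dist v a : ℝ) ≤ r}

/-- The distance from `v` to `S`; junk value `0` when `S` is empty. -/
noncomputable def distToSet (Γ : SimpleGraph V) (S : Set V) (v : V) : ℕ :=
  sInf (Γ.dist v '' S)

theorem distToSet_le {S : Set V} {v s : V} (hs : s ∈ S) : distToSet Γ S v ≤ Γ.dist v s :=
  Nat.sInf_le ⟨s, hs, rfl⟩

theorem exists_dist_eq_distToSet {S : Set V} (hS : S.Nonempty) (v : V) :
    ∃ s ∈ S, Γ.dist v s = distToSet Γ S v :=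
  Nat.sInf_mem (hS.image _)

theorem _root_.SimpleGraph.Connected.dist_triangle_real (hc : Γ.Connected) (u v w : V) :
    (Γ.dist u w : ℝ) ≤ Γ.dist u v + Γ.dist v w := by
  exact_mod_cast hc.dist_triangle

theorem dist_add_dist_le_length {a b t : V} (p : Γ.Walk a b) (ht : t ∈ p.support) :
    Γ.dist a t + Γ.dist t b ≤ p.length := by
  classical
  rw [← p.take_spec ht, Walk.length_append]
  exact add_le_add (dist_le _) (dist_le _)

namespace ReachOut

variable {S T : Set V} {a b c : V}

theorem refl (ha : a ∉ S) : ReachOut Γ S a a :=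
  ⟨Walk.nil, by simpa using ha⟩

theorem symm (h : ReachOut Γ S a b) : ReachOut Γ S b a := by
  obtain ⟨w, hw⟩ := h
  exact ⟨w.reverse, fun v hv => hw v (by simpa using hv)⟩

theorem trans (h₁ : ReachOut Γ S a b) (h₂ : ReachOut Γ S b c) : ReachOut Γ S a c := by
  obtain ⟨w₁, hw₁⟩ := h₁
  obtain ⟨w₂, hw₂⟩ := h₂
  refine ⟨w₁.append w₂, fun v hv => ?_⟩
  rcases (Walk.mem_support_append_iff w₁ w₂).1 hv with h | h
  exacts [hw₁ v h, hw₂ v h]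

theorem left_notMem (h : ReachOut Γ S a b) : a ∉ S := by
  obtain ⟨w, hw⟩ := h
  exact hw a w.start_mem_support

theorem cons (hadj : Γ.Adj a b) (ha : a ∉ S) (h : ReachOut Γ S b c) : ReachOut Γ S a c := by
  obtain ⟨w, hw⟩ := h
  refine ⟨Walk.cons hadj w, fun v hv => ?_⟩
  rcases List.mem_cons.1 (Walk.support_cons _ _ ▸ hv) with rfl | h
  exacts [ha, hw v h]

theorem of_adj (hadj : Γ.Adj a b) (ha : a ∉ S) (hb : b ∉ S) : ReachOut Γ S a b :=
  cons hadj ha (refl hb)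

theorem map {Γ' : SimpleGraph W} {S' : Set W} (F : V → W) (hF₀ : ∀ u ∉ T, F u ∉ S')
    (hF₁ : ∀ u b, Γ.Adj u b → u ∉ T → ReachOut Γ' S' (F u) (F b)) (h : ReachOut Γ T a b) :
    ReachOut Γ' S' (F a) (F b) := by
  obtain ⟨w, hw⟩ := h
  induction w with
  | nil => exact refl (hF₀ _ (hw _ (Walk.start_mem_support _)))
  | cons hadj w ih =>
    exact (hF₁ _ _ hadj (hw _ (Walk.start_mem_support _))).trans
      (ih fun v hv => hw v (List.mem_cons_of_mem _ hv))

end ReachOut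

/-- A geodesic from `a` to `b` avoids every vertex farther from `a` than `b`. -/
theorem reachOut_of_dist_lt (hc : Γ.Connected) {S : Set V} {a b : V}
    (h : ∀ s ∈ S, Γ.dist a b < Γ.dist a s) : ReachOut Γ S a b := by
  obtain ⟨p, hp⟩ := hc.exists_walk_length_eq_dist a b
  refine ⟨p, fun v hv hvS => ?_⟩
  have := dist_add_dist_le_length p hv
  have := h v hvS
  omega

theorem IsCompOut.mem_iff_reachOut {S Z : Set V} (hZ : IsCompOut Γ S Z) {x y : V}
    (hx : x ∈ Z) : y ∈ Z ↔ ReachOut Γ S x y := by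
  obtain ⟨a, -, ha⟩ := hZ
  rw [← ha]
  exact ⟨((ha x).2 hx).symm.trans, ((ha x).2 hx).trans⟩

theorem IsCompOut.mem_of_dist_lt (hc : Γ.Connected) {S Z : Set V} (hZ : IsCompOut Γ S Z)
    {z w : V} (hz : z ∈ Z) (hw : Γ.dist z w < distToSet Γ S z) : w ∈ Z :=
  (hZ.mem_iff_reachOut hz).2 (reachOut_of_dist_lt hc fun _ hs => hw.trans_le (distToSet_le hs))

theorem IsCompOut.notMem_of_mem {S Z : Set V} (hZ : IsCompOut Γ S Z) {x : V} (hx : x ∈ Z) :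
    x ∉ S :=
  ((hZ.mem_iff_reachOut hx).1 hx).left_notMem

theorem finite_setOf_dist_le (hc : Γ.Connected) (hlf : LocFin Γ) (v : V) (n : ℕ) :
    {w | Γ.dist v w ≤ n}.Finite := by
  induction n with
  | zero =>
    refine (Set.finite_singleton v).subset fun w hw => ?_
    exact ((hc.dist_eq_zero_iff.1 (Nat.le_zero.1 hw))).symm
  | succ n ih =>
    refine (ih.union (ih.biUnion fun x _ => hlf x)).subset fun w hw => ?_
    by_cases h : Γ.dist v w ≤ n
    · exact Or.inl h
    obtain ⟨p, hp⟩ := hc.exists_walk_length_eq_dist w v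
    cases p with
    | nil => simp at h
    | @cons _ x _ hadj q =>
      refine Or.inr (Set.mem_biUnion (x := x) ?_ hadj.symm)
      have hw : Γ.dist w v ≤ n + 1 := dist_comm (G := Γ) ▸ hw
      have := dist_le q
      simp only [Walk.length_cons] at hp
      show Γ.dist v x ≤ n
      rw [SimpleGraph.dist_comm]
      omega

theorem finite_closedNbhd (hc : Γ.Connected) (hlf : LocFin Γ) {A : Set V} (hA : A.Finite)
    (r : ℝ) : (closedNbhd Γ A r).Finite := by
  refine (hA.biUnion fun a _ => finite_setOf_dist_le hc hlf a ⌊r⌋₊).subset ?_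
  rintro v ⟨a, ha, hv⟩
  refine Set.mem_biUnion ha (Nat.le_floor ?_)
  rwa [SimpleGraph.dist_comm]

theorem IsCompOut.exists_reachOut_of_notMem {S T Z : Set V} (hZ : IsCompOut Γ S Z)
    (hTZ : T ⊆ Z) {u y : V} (w : Γ.Walk u y) (hy : y ∈ S) (hu : u ∉ Z) :
    ∃ s ∈ S, ReachOut Γ T u s := by
  induction w with
  | nil => exact ⟨_, hy, .refl fun h => hu (hTZ h)⟩
  | @cons u b _ hadj w ih =>
    by_cases huS : u ∈ S
    · exact ⟨u, huS, .refl fun h => hu (hTZ h)⟩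
    have hb : b ∉ Z := fun hb =>
      hu ((hZ.mem_iff_reachOut hb).2 (.of_adj hadj.symm (hZ.notMem_of_mem hb) huS))
    obtain ⟨s, hs, h⟩ := ih hy hb
    exact ⟨s, hs, .cons hadj (fun h => hu (hTZ h)) h⟩

theorem IsCompOut.compl_subset_setOf_reachOut (hc : Γ.Connected) {S T Z : Set V}
    (hZ : IsCompOut Γ S Z) (hTZ : T ⊆ Z) (hST : ∀ s₁ ∈ S, ∀ s₂ ∈ S, ReachOut Γ T s₁ s₂)
    {x s : V} (hs : s ∈ S) (hx : ReachOut Γ T x s) : Zᶜ ⊆ {y | ReachOut Γ T x y} := by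
  intro u hu
  obtain ⟨w⟩ := hc.preconnected u s
  obtain ⟨s', hs', h⟩ := hZ.exists_reachOut_of_notMem hTZ w hs hu
  exact hx.trans ((hST s hs s' hs').trans h.symm)

theorem exists_reachOut_of_not_reachOut (hc : Γ.Connected) {S T : Set V} {x s : V}
    (hsT : s ∉ T) (hnear : ∀ s' ∈ S, Γ.dist x s ≤ Γ.dist x s')
    (h : ¬ ReachOut Γ T x s) :
    ∃ t ∈ T, ReachOut Γ S x t ∧ Γ.dist x t + Γ.dist t s ≤ Γ.dist x s := by
  obtain ⟨p, hp⟩ := hc.exists_walk_length_eq_dist x s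
  obtain ⟨t, htp, htT⟩ : ∃ t ∈ p.support, t ∈ T := by
    by_contra! hpT
    exact h ⟨p, hpT⟩
  have hsum := hp ▸ dist_add_dist_le_length p htp
  have hts : 0 < Γ.dist t s := hc.pos_dist_of_ne fun hts => hsT (hts ▸ htT)
  refine ⟨t, htT, reachOut_of_dist_lt hc fun s' hs' => ?_, hsum⟩
  have := hnear s' hs'
  omega

/-- The radius `2 l² + 2 l` makes `fi` send every vertex outside the neighbourhood to distance
more than `2 l` from `S`, while `fi` stretches an edge to length at most `2 l`. -/
theorem reachOut_of_reachOut_closedNbhd_image (hc : Γ.Connected) {l : ℝ} (hl : 0 ≤ l)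
    {f fi : V → V} (hf : IsQIE Γ Γ l l f) (hfi : IsQIE Γ Γ l l fi) (hinv : IsQInv Γ l fi f)
    {S : Set V} {x y : V} (h : ReachOut Γ (closedNbhd Γ (f '' S) (2 * l ^ 2 + 2 * l)) x y) :
    ReachOut Γ S (fi x) (fi y) := by
  have hfar : ∀ u ∉ closedNbhd Γ (f '' S) (2 * l ^ 2 + 2 * l), ∀ s ∈ S,
      2 * l < Γ.dist (fi u) s := by
    intro u hu s hs
    by_contra! hus
    refine hu ⟨f s, ⟨s, hs, rfl⟩, ?_⟩
    have h₁ := hc.dist_triangle_real u (f (fi u)) (f s)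
    have h₂ := (hf (fi u) s).2
    have h₃ := hinv u
    rw [SimpleGraph.dist_comm] at h₃
    nlinarith
  refine h.map fi (fun u hu hfu => ?_) fun u b hadj hu => reachOut_of_dist_lt hc fun s hs => ?_
  · have := hfar u hu _ hfu
    simp only [SimpleGraph.dist_self, Nat.cast_zero] at this
    linarith
  · have h₁ := (hfi u b).2
    rw [dist_eq_one_iff_adj.2 hadj, Nat.cast_one] at h₁
    have h₂ : (Γ.dist (fi u) (fi b) : ℝ) < Γ.dist (fi u) s := by linarith [hfar u hu s hs]
    exact_mod_cast h₂

theorem dist_le_setDiam {S : Set V} (hS : S.Finite) {x y : V} (hx : x ∈ S) (hy : y ∈ S) :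
    Γ.dist x y ≤ setDiam Γ S := by
  refine le_csSup ?_ ⟨x, hx, y, hy, rfl⟩
  refine ((hS.prod hS).image fun p : V × V => Γ.dist p.1 p.2).bddAbove.mono ?_
  rintro _ ⟨x, hx, y, hy, rfl⟩
  exact ⟨(x, y), ⟨hx, hy⟩, rfl⟩

theorem IsQIE.lt_dist_of_mul_lt {f : V → V} {l r : ℝ} (hl : 0 < l) (hf : IsQIE Γ Γ l l f)
    {x y : V} (h : l * (l + r) < Γ.dist x y) : r < Γ.dist (f x) (f y) := by
  have h₁ := (hf x y).1
  have h₂ : l + r < Γ.dist x y / l := by rwa [lt_div_iff₀ hl, mul_comm]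
  linarith

theorem IsQIE.dist_le_of_mem_closedNbhd_image (hc : Γ.Connected) {f : V → V} {l d r : ℝ}
    (hl : 0 ≤ l) (hf : IsQIE Γ Γ l l f) {S : Set V}
    (hdiam : ∀ x ∈ S, ∀ y ∈ S, (Γ.dist x y : ℝ) ≤ d) {s₁ t : V} (hs₁ : s₁ ∈ S)
    (ht : t ∈ closedNbhd Γ (f '' S) r) : (Γ.dist (f s₁) t : ℝ) ≤ l * d + l + r := by
  obtain ⟨_, ⟨s, hs, rfl⟩, hts⟩ := ht
  have h₁ := hc.dist_triangle_real (f s₁) (f s) t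
  have h₂ := (hf s₁ s).2
  have h₃ := mul_le_mul_of_nonneg_left (hdiam s₁ hs₁ s hs) hl
  rw [SimpleGraph.dist_comm] at hts
  linarith

theorem IsCompOut.exists_dist_add_distToSet_le (hc : Γ.Connected) {S T Z : Set V}
    (hZ : IsCompOut Γ S Z) (hS : S.Nonempty) (hTZ : T ⊆ Z) {x : V}
    (hx : ∀ s ∈ S, ¬ ReachOut Γ T x s) :
    x ∈ Z ∧ ∃ t ∈ T, Γ.dist x t + distToSet Γ S t ≤ distToSet Γ S x := by
  obtain ⟨s, hs, hxs⟩ := exists_dist_eq_distToSet hS x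
  obtain ⟨t, ht, hxt, hsum⟩ := exists_reachOut_of_not_reachOut hc
    (fun hsT => hZ.notMem_of_mem (hTZ hsT) hs) (fun s' hs' => hxs ▸ distToSet_le hs') (hx s hs)
  refine ⟨(hZ.mem_iff_reachOut (hTZ ht)).2 hxt.symm, t, ht, ?_⟩
  have := distToSet_le (Γ := Γ) (v := t) hs
  omega

theorem IsCompOut.distToSet_le_of_dist_image_le [Infinite V] (hc : Γ.Connected)
    (hlf : LocFin Γ) {S Z : Set V} (hZ : IsCompOut Γ S Z) (hZfin : Z.Finite) {d : ℝ}
    (hdiam : ∀ x ∈ S, ∀ y ∈ S, (Γ.dist x y : ℝ) ≤ d) {z' : V} (hz' : z' ∈ Z)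
    (hmax : ∀ w ∈ Z, distToSet Γ S w ≤ distToSet Γ S z') {l B : ℝ} (hl : 1 ≤ l)
    {f fi : V → V} (hf : IsQIE Γ Γ l l f) (hfi : IsQIE Γ Γ l l fi) (hfif : IsQInv Γ l f fi)
    (hffi : IsQInv Γ l fi f) {s₁ : V} (hs₁ : s₁ ∈ S) (hB : (Γ.dist z' (f s₁) : ℝ) ≤ B) :
    (distToSet Γ S z' : ℝ) ≤ l * (B + (l + 1) * d + 4 * l ^ 2 + 6 * l) := by
  set D := distToSet Γ S z'
  by_contra! hD
  set ρ := 2 * l ^ 2 + 2 * l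
  set R := B + l * d + l + ρ
  set T := closedNbhd Γ (f '' S) ρ
  have hB0 : 0 ≤ B := (Nat.cast_nonneg _).trans hB
  have hd0 : 0 ≤ d := (Nat.cast_nonneg _).trans (hdiam s₁ hs₁ s₁ hs₁)
  have hRD : R + d < D := by nlinarith
  have hlRD : l * (l + (ρ + R)) < D := by nlinarith
  have hz'S : ∀ s ∈ S, (D : ℝ) ≤ Γ.dist z' s := fun s hs => by exact_mod_cast distToSet_le hs
  have hball : ∀ w, (Γ.dist z' w : ℝ) < D → w ∈ Z := fun w hw =>
    hZ.mem_of_dist_lt hc hz' (by exact_mod_cast hw)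
  have hTR : ∀ t ∈ T, (Γ.dist z' t : ℝ) ≤ R := fun t ht => by
    linarith [hc.dist_triangle_real z' (f s₁) t,
      hf.dist_le_of_mem_closedNbhd_image hc (by linarith) hdiam hs₁ ht]
  have hTZ : T ⊆ Z := fun t ht => hball t (by linarith [hTR t ht])
  have hST : ∀ s₂ ∈ S, ∀ s₃ ∈ S, ReachOut Γ T s₂ s₃ := fun s₂ hs₂ s₃ hs₃ =>
    reachOut_of_dist_lt hc fun t ht => by
      have h₁ := hc.dist_triangle_real z' t s₂
      rw [SimpleGraph.dist_comm (u := t)] at h₁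
      have : (Γ.dist s₂ s₃ : ℝ) < Γ.dist s₂ t := by
        linarith [hdiam s₂ hs₂ s₃ hs₃, hTR t ht, hz'S s₂ hs₂]
      exact_mod_cast this
  have hfiZ : fi (f z') ∈ Z := hball _ <| by
    rw [SimpleGraph.dist_comm]
    nlinarith [hfif z']
  have hreach : {y | ReachOut Γ T (f z') y} ⊆ closedNbhd Γ (f '' Z) l := fun y hy =>
    ⟨f (fi y), ⟨fi y, (hZ.mem_iff_reachOut hfiZ).2
      (reachOut_of_reachOut_closedNbhd_image hc (by linarith) hf hfi hffi hy), rfl⟩,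
      by rw [SimpleGraph.dist_comm]; exact hffi y⟩
  obtain ⟨hfz'Z, t, ⟨_, ⟨s, hs, rfl⟩, hts⟩, hdeeper⟩ := hZ.exists_dist_add_distToSet_le hc
    ⟨s₁, hs₁⟩ hTZ fun s hs h => hZfin.infinite_compl <|
      (finite_closedNbhd hc hlf (hZfin.image f) l).subset
        ((hZ.compl_subset_setOf_reachOut hc hTZ hST hs h).trans hreach)
  obtain ⟨s', hs', hts'⟩ := exists_dist_eq_distToSet ⟨s₁, hs₁⟩ t
  have hdeeper' : (Γ.dist (f z') t : ℝ) + Γ.dist t s' ≤ D := by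
    exact_mod_cast hts' ▸ hdeeper.trans (hmax _ hfz'Z)
  have hfar := hf.lt_dist_of_mul_lt (by linarith) (hlRD.trans_le (hz'S s hs))
  linarith [hc.dist_triangle_real (f z') t (f s), hc.dist_triangle_real z' t s',
    hTR t ⟨_, ⟨s, hs, rfl⟩, hts⟩, hz'S s' hs']

theorem IsCompOut.distToSet_le_of_isQAct {G₀ : Type*} [Group G₀] [Infinite V]
    (hc : Γ.Connected) (hlf : LocFin Γ) {l B : ℝ} (hl : 1 ≤ l) {φ : G₀ → V → V}
    (hqa : IsQAct Γ l φ) (hcb : Cobdd Γ B φ) {S Z : Set V} (hS : S.Nonempty)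
    (hZ : IsCompOut Γ S Z) (hZfin : Z.Finite) {d : ℝ}
    (hdiam : ∀ x ∈ S, ∀ y ∈ S, (Γ.dist x y : ℝ) ≤ d) {z : V} (hz : z ∈ Z) :
    (distToSet Γ S z : ℝ) ≤ l * (B + (l + 1) * d + 4 * l ^ 2 + 6 * l) := by
  obtain ⟨z', hz', hmax⟩ := Set.exists_max_image Z (distToSet Γ S) hZfin ⟨z, hz⟩
  obtain ⟨s₁, hs₁⟩ := hS
  obtain ⟨g, hg⟩ := hcb z' s₁
  refine le_trans (by exact_mod_cast hmax z hz) <|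
    hZ.distToSet_le_of_dist_image_le hc hlf hZfin hdiam hz' hmax hl (hqa.1 g).1 (hqa.1 g⁻¹).1
      (hqa.2.2 g).1 (hqa.2.2 g).2 hs₁ hg

theorem exists_dist_le_of_finite [Finite V] (Γ : SimpleGraph V) :
    ∃ M : ℕ, ∀ x y : V, Γ.dist x y ≤ M := by
  obtain ⟨M, hM⟩ := (Set.finite_range fun p : V × V => Γ.dist p.1 p.2).bddAbove
  exact ⟨M, fun x y => hM ⟨(x, y), rfl⟩⟩

end Paper

open Paper in
theorem stmt2 {V G₀ : Type*} [Group G₀] (Γ : SimpleGraph V)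
    (hc : Γ.Connected) (hlf : LocFin Γ)
    (l B : ℝ) (hl : 1 ≤ l) (hB : 0 ≤ B)
    (φ : G₀ → V → V) (hqa : IsQAct Γ l φ) (hcb : Cobdd Γ B φ) :
    ∃ C : ℝ, 1 ≤ C ∧
      ∀ S : Set V, S.Finite → S.Nonempty →
        ∀ Z : Set V, Z.Finite → IsCompOut Γ S Z →
          ∀ z ∈ Z, ∃ s ∈ S, (Γ.dist z s : ℝ) < C * (setDiam Γ S : ℝ) + C := by
  rcases finite_or_infinite V with hV | hV
  · obtain ⟨M, hM⟩ := exists_dist_le_of_finite Γ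
    refine ⟨M + 1, by simp, fun S _ ⟨s, hs⟩ Z _ _ z _ => ⟨s, hs, ?_⟩⟩
    have : (Γ.dist z s : ℝ) ≤ M := by exact_mod_cast hM z s
    nlinarith [(setDiam Γ S).cast_nonneg (α := ℝ)]
  · have hl2 : l ≤ l ^ 2 := by nlinarith
    have hl3 : l ^ 2 ≤ l ^ 3 := by nlinarith
    have hlB : 0 ≤ l * B := mul_nonneg (by linarith) hB
    refine ⟨10 * l ^ 3 + l * B + 1, by linarith, fun S hS hSne Z hZfin hZ z hz => ?_⟩
    obtain ⟨s, hs, hzs⟩ := exists_dist_eq_distToSet hSne z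
    have hdepth := hZ.distToSet_le_of_isQAct hc hlf hl hqa hcb hSne hZfin
      (fun x hx y hy => Nat.cast_le.2 (dist_le_setDiam hS hx hy)) hz
    refine ⟨s, hs, hzs ▸ hdepth.trans_lt ?_⟩
    have hdiam := mul_le_mul_of_nonneg_right (by linarith : l * (l + 1) ≤ 10 * l ^ 3 + l * B + 1)
      (setDiam Γ S).cast_nonneg (α := ℝ)
    linarith
end

section
/- Let G be a group acting by automorphisms on a connected, bounded-valence graph Γ, and let Λ ⊆ Γ be a connected, quasi-transitively stabilised subgraph. If incut(Λ) is finite, then Λ has uniform coboundary (that is, outcut(Λ) is also finite). -/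
open SimpleGraph

namespace Stmt7Aux
open Paper SimpleGraph

variable {V : Type*} {Γ : SimpleGraph V}

/-- Inner vertex boundary of a vertex set. -/
def Bd (Γ : SimpleGraph V) (U : Set V) : Set V :=
  {v | v ∈ U ∧ ∃ u, u ∉ U ∧ Γ.Adj v u}

lemma reachOut_refl {A : Set V} {a : V} (ha : a ∉ A) : ReachOut Γ A a a := by
  refine ⟨Walk.nil, ?_⟩
  intro v hv
  simp only [Walk.support_nil, List.mem_singleton] at hv
  subst hv
  exact ha

lemma reachOut_symm {A : Set V} {a b : V} (h : ReachOut Γ A a b) : ReachOut Γ A b a := by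
  obtain ⟨p, hp⟩ := h
  exact ⟨p.reverse, fun v hv => hp v (by simpa [Walk.support_reverse] using hv)⟩

lemma reachOut_trans {A : Set V} {a b c : V} (h1 : ReachOut Γ A a b)
    (h2 : ReachOut Γ A b c) : ReachOut Γ A a c := by
  obtain ⟨p, hp⟩ := h1; obtain ⟨q, hq⟩ := h2
  refine ⟨p.append q, fun v hv => ?_⟩
  rcases (Walk.mem_support_append_iff _ _).1 hv with h | h
  exacts [hp v h, hq v h]

lemma reachOut_of_mem_support {A : Set V} :
    ∀ {a b : V} (p : Γ.Walk a b), (∀ v ∈ p.support, v ∉ A) →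
      ∀ {x : V}, x ∈ p.support → ReachOut Γ A a x := by
  intro a b p
  induction p with
  | nil =>
    intro hp x hx
    simp only [Walk.support_nil, List.mem_singleton] at hx
    subst hx
    exact reachOut_refl (hp _ (by simp))
  | @cons u c b h q ih =>
    intro hp x hx
    simp only [Walk.support_cons, List.mem_cons] at hx
    have hu : u ∉ A := hp u (by simp)
    have hc : c ∉ A := hp c (by simp)
    rcases hx with rfl | hx
    · exact reachOut_refl hu
    · refine reachOut_trans (⟨Walk.cons h Walk.nil, ?_⟩ : ReachOut Γ A u c)
        (ih (fun v hv => hp v (by simp [hv])) hx)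
      intro v hv
      simp only [Walk.support_cons, Walk.support_nil, List.mem_cons,
        List.not_mem_nil, or_false] at hv
      rcases hv with rfl | rfl
      exacts [hu, hc]

lemma compOut_mem_iff {A U : Set V} (hU : IsCompOut Γ A U) {b : V} (hb : b ∈ U) (c : V) :
    ReachOut Γ A b c ↔ c ∈ U := by
  obtain ⟨a, ha, hA⟩ := hU
  have hab := (hA b).2 hb
  exact ⟨fun h => (hA c).1 (reachOut_trans hab h),
    fun h => reachOut_trans (reachOut_symm hab) ((hA c).2 h)⟩

lemma not_mem_of_mem_compOut {A U : Set V} (hU : IsCompOut Γ A U) {b : V}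
    (hb : b ∈ U) : b ∉ A := by
  obtain ⟨a, ha, hA⟩ := hU
  obtain ⟨p, hp⟩ := (hA b).2 hb
  exact hp b p.end_mem_support

lemma compOut_eq {A U U' : Set V} (hU : IsCompOut Γ A U) (hU' : IsCompOut Γ A U')
    {x : V} (hx : x ∈ U) (hx' : x ∈ U') : U = U' := by
  ext c
  rw [← compOut_mem_iff hU hx c, compOut_mem_iff hU' hx' c]

lemma mem_of_adj {A U : Set V} (hU : IsCompOut Γ A U) {v u : V} (hv : v ∈ U)
    (h : Γ.Adj v u) (hu : u ∉ A) : u ∈ U := by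
  have hvA : v ∉ A := not_mem_of_mem_compOut hU hv
  refine (compOut_mem_iff hU hv u).1 ⟨Walk.cons h Walk.nil, ?_⟩
  intro x hx
  simp only [Walk.support_cons, Walk.support_nil, List.mem_cons,
    List.not_mem_nil, or_false] at hx
  rcases hx with rfl | rfl
  exacts [hvA, hu]

lemma induce_reachable {U : Set V} :
    ∀ {a b : V} (p : Γ.Walk a b), (∀ x ∈ p.support, x ∈ U) →
      ∀ (ha : a ∈ U) (hb : b ∈ U), (Γ.induce U).Reachable ⟨a, ha⟩ ⟨b, hb⟩ := by
  intro a b p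
  induction p with
  | nil =>
    intro _ ha hb
    exact Reachable.refl _
  | @cons u c b h q ih =>
    intro hp ha hb
    have hc : c ∈ U := hp c (by simp)
    refine (Adj.reachable ?_).trans (ih (fun x hx => hp x (by simp [hx])) hc hb)
    show Γ.Adj u c
    exact h

lemma compOut_reachable {A U : Set V} (hU : IsCompOut Γ A U) {a b : V}
    (ha : a ∈ U) (hb : b ∈ U) : (Γ.induce U).Reachable ⟨a, ha⟩ ⟨b, hb⟩ := by
  obtain ⟨p, hp⟩ := (compOut_mem_iff hU ha b).2 hb
  exact induce_reachable p
    (fun x hx => (compOut_mem_iff hU ha x).1 (reachOut_of_mem_support p hp hx)) ha hb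

lemma ball_finite {W : Type*} (G : SimpleGraph W) (hlf : ∀ v : W, (G.neighborSet v).Finite)
    (a : W) : ∀ k : ℕ, {w : W | ∃ p : G.Walk w a, p.length ≤ k}.Finite := by
  intro k
  induction k with
  | zero =>
    apply Set.Finite.subset (Set.finite_singleton a)
    rintro w ⟨p, hp⟩
    simp only [Nat.le_zero] at hp
    simp [Walk.eq_of_length_eq_zero hp]
  | succ k ih =>
    apply Set.Finite.subset (ih.union (Set.Finite.biUnion ih fun u _ => hlf u))
    rintro w ⟨p, hp⟩
    cases p with
    | nil => exact Or.inl ⟨Walk.nil, by simp⟩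
    | @cons _ c _ h q =>
      right
      refine Set.mem_biUnion (show c ∈ _ from ⟨q, ?_⟩) h.symm
      simpa using Nat.lt_succ_iff.mp (by simpa [Nat.lt_succ_iff] using hp)

lemma exists_bound (hbv : BddVal Γ) (L : Γ.Subgraph) (hLc : L.coe.Connected)
    {k : ℕ} (hin : IncutBddSub Γ L k) {U : Set V} (hU : IsCompOut Γ L.verts U) :
    ∃ K : ℕ, ∀ (v w : V) (hv : v ∈ Bd Γ U) (hw : w ∈ Bd Γ U),
      (Γ.induce U).dist ⟨v, hv.1⟩ ⟨w, hw.1⟩ ≤ K := by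
  obtain ⟨d, hd⟩ := hbv
  rcases Set.eq_empty_or_nonempty (Bd Γ U) with hBd | ⟨v₀, hv₀⟩
  · exact ⟨0, fun v w hv _ => absurd hv (by simp [hBd])⟩
  obtain ⟨hv₀U, u₀, hu₀, hadj₀⟩ := hv₀
  have hu₀L : u₀ ∈ L.verts := by
    by_contra h
    exact hu₀ (mem_of_adj hU hv₀U hadj₀ h)
  have ha₀ : u₀ ∈ AttachSet Γ L.verts U := ⟨hu₀L, v₀, hv₀U, hadj₀.symm⟩
  have hlfL : ∀ x : L.verts, (L.coe.neighborSet x).Finite := by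
    intro x
    have hsub : Subtype.val '' (L.coe.neighborSet x) ⊆ Γ.neighborSet (x : V) := by
      rintro _ ⟨y, hy, rfl⟩
      exact L.adj_sub hy
    exact Set.Finite.of_finite_image (((hd (x : V)).1).subset hsub)
      (Set.injOn_of_injective Subtype.val_injective)
  have hAfin : (AttachSet Γ L.verts U).Finite := by
    have hsub : AttachSet Γ L.verts U ⊆
        Subtype.val '' {y : L.verts | ∃ p : L.coe.Walk y ⟨u₀, hu₀L⟩, p.length ≤ k} := by
      rintro v ⟨hvL, u, huU, hadj⟩
      have hdist : L.coe.dist ⟨v, hvL⟩ ⟨u₀, hu₀L⟩ ≤ k :=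
        hin U hU ⟨v, hvL⟩ ⟨u₀, hu₀L⟩ ⟨hvL, u, huU, hadj⟩ ha₀
      obtain ⟨p, hp⟩ := (hLc.preconnected ⟨v, hvL⟩ ⟨u₀, hu₀L⟩).exists_walk_length_eq_dist
      exact ⟨⟨v, hvL⟩, ⟨p, hp ▸ hdist⟩, rfl⟩
    exact Set.Finite.subset ((ball_finite L.coe hlfL _ k).image _) hsub
  have hBdfin : (Bd Γ U).Finite := by
    have hsub : Bd Γ U ⊆ ⋃ a ∈ AttachSet Γ L.verts U, Γ.neighborSet a := by
      rintro v ⟨hvU, u, huU, hadj⟩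
      have huL : u ∈ L.verts := by
        by_contra h
        exact huU (mem_of_adj hU hvU hadj h)
      exact Set.mem_biUnion ⟨huL, v, hvU, hadj.symm⟩ hadj.symm
    exact Set.Finite.subset (hAfin.biUnion fun a _ => (hd a).1) hsub
  have := hBdfin.to_subtype
  have hfin : ((fun q : (Bd Γ U) × (Bd Γ U) =>
      (Γ.induce U).dist ⟨q.1.1, q.1.2.1⟩ ⟨q.2.1, q.2.2.1⟩) '' Set.univ).Finite :=
    Set.Finite.image _ Set.finite_univ
  obtain ⟨K, hK⟩ := hfin.bddAbove
  exact ⟨K, fun v w hv hw => hK ⟨⟨⟨v, hv⟩, ⟨w, hw⟩⟩, Set.mem_univ _, rfl⟩⟩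

section Action

variable {G₀ : Type*} [Group G₀] [MulAction G₀ V]

lemma stabsub_inv {g : G₀} {L : Γ.Subgraph} (h : StabSub Γ g L) : StabSub Γ g⁻¹ L := by
  constructor
  · intro v
    have := h.1 (g⁻¹ • v)
    rw [smul_inv_smul] at this
    exact this.symm
  · intro a b
    have := h.2 (g⁻¹ • a) (g⁻¹ • b)
    rw [smul_inv_smul, smul_inv_smul] at this
    exact this.symm

lemma reachOut_smul (hact : ∀ (g : G₀) (a b : V), Γ.Adj (g • a) (g • b) ↔ Γ.Adj a b)
    {L : Γ.Subgraph} {g : G₀} (hg : StabSub Γ g L) {a b : V}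
    (h : ReachOut Γ L.verts a b) : ReachOut Γ L.verts (g • a) (g • b) := by
  obtain ⟨p, hp⟩ := h
  refine ⟨p.map ⟨fun x => g • x, fun {x y} hxy => (hact g x y).2 hxy⟩, ?_⟩
  intro v hv
  rw [Walk.support_map] at hv
  obtain ⟨x, hx, rfl⟩ := List.mem_map.1 hv
  exact fun hmem => hp x hx ((hg.1 x).2 hmem)

lemma compOut_smul (hact : ∀ (g : G₀) (a b : V), Γ.Adj (g • a) (g • b) ↔ Γ.Adj a b)
    {L : Γ.Subgraph} {g : G₀} (hg : StabSub Γ g L) {U : Set V}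
    (hU : IsCompOut Γ L.verts U) : IsCompOut Γ L.verts {x | g • x ∈ U} := by
  obtain ⟨a, ha, hA⟩ := hU
  refine ⟨g⁻¹ • a, by simpa using ha, fun b => ?_⟩
  constructor
  · intro h
    have h2 := reachOut_smul hact hg h
    rw [smul_inv_smul] at h2
    exact (hA _).1 h2
  · intro h
    have h2 := reachOut_smul hact (stabsub_inv hg) ((hA (g • b)).2 h)
    rwa [inv_smul_smul] at h2

lemma bd_smul (hact : ∀ (g : G₀) (a b : V), Γ.Adj (g • a) (g • b) ↔ Γ.Adj a b)
    {g : G₀} {U : Set V} {x : V} :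
    x ∈ Bd Γ {y | g • y ∈ U} ↔ g • x ∈ Bd Γ U := by
  constructor
  · rintro ⟨hx, u, hu, hadj⟩
    exact ⟨hx, g • u, hu, (hact g x u).2 hadj⟩
  · rintro ⟨hx, u, hu, hadj⟩
    refine ⟨hx, g⁻¹ • u, by simpa using hu, ?_⟩
    have h2 := hact g x (g⁻¹ • u)
    rw [smul_inv_smul] at h2
    exact h2.1 hadj

lemma bound_smul (hact : ∀ (g : G₀) (a b : V), Γ.Adj (g • a) (g • b) ↔ Γ.Adj a b)
    {L : Γ.Subgraph} {g : G₀} (hg : StabSub Γ g L) {U : Set V}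
    (hU : IsCompOut Γ L.verts U) {K : ℕ}
    (hP : ∀ (v w : V) (hv : v ∈ Bd Γ {y | g • y ∈ U}) (hw : w ∈ Bd Γ {y | g • y ∈ U}),
      (Γ.induce {y | g • y ∈ U}).dist ⟨v, hv.1⟩ ⟨w, hw.1⟩ ≤ K) :
    ∀ (v w : V) (hv : v ∈ Bd Γ U) (hw : w ∈ Bd Γ U),
      (Γ.induce U).dist ⟨v, hv.1⟩ ⟨w, hw.1⟩ ≤ K := by
  intro v w hv hw
  have hs : IsCompOut Γ L.verts {y | g • y ∈ U} := compOut_smul hact hg hU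
  have hv' : g⁻¹ • v ∈ Bd Γ {y | g • y ∈ U} := by
    rw [bd_smul hact, smul_inv_smul]
    exact hv
  have hw' : g⁻¹ • w ∈ Bd Γ {y | g • y ∈ U} := by
    rw [bd_smul hact, smul_inv_smul]
    exact hw
  obtain ⟨p, hp⟩ := (compOut_reachable hs hv'.1 hw'.1).exists_walk_length_eq_dist
  have hle : p.length ≤ K := le_trans (le_of_eq hp) (hP _ _ hv' hw')
  let f : Γ.induce {y | g • y ∈ U} →g Γ.induce U :=
    ⟨fun x => ⟨g • x.1, x.2⟩, fun {x y} hxy => (hact g x.1 y.1).2 hxy⟩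
  have hcopy1 : f ⟨g⁻¹ • v, hv'.1⟩ = (⟨v, hv.1⟩ : U) := Subtype.ext (smul_inv_smul g v)
  have hcopy2 : f ⟨g⁻¹ • w, hw'.1⟩ = (⟨w, hw.1⟩ : U) := Subtype.ext (smul_inv_smul g w)
  have hdist := SimpleGraph.dist_le ((p.map f).copy hcopy1 hcopy2)
  rw [Walk.length_copy, Walk.length_map] at hdist
  exact hdist.trans hle

end Action

end Stmt7Aux

open Paper in
theorem stmt7 {V G₀ : Type*} [Group G₀] [MulAction G₀ V] (Γ : SimpleGraph V)
    (hc : Γ.Connected) (hbv : BddVal Γ)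
    (hact : ∀ (g : G₀) (a b : V), Γ.Adj (g • a) (g • b) ↔ Γ.Adj a b)
    (Λ : Γ.Subgraph) (hΛc : Λ.coe.Connected)
    (hqts : ∃ F : Set V, F.Finite ∧ F ⊆ Λ.verts ∧
      ∀ v ∈ Λ.verts, ∃ g : G₀, StabSub Γ g Λ ∧ ∃ w ∈ F, g • w = v)
    (hin : ∃ k : ℕ, IncutBddSub Γ Λ k) :
    UnifCobSub Γ Λ := by
  classical
  refine ⟨hin, ?_⟩
  obtain ⟨k, hk⟩ := hin
  obtain ⟨F, hFfin, hFsub, hF⟩ := hqts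
  obtain ⟨d, hd⟩ := hbv
  -- a bound for each component, by choice
  have hex : ∀ U : Set V, IsCompOut Γ Λ.verts U →
      ∃ K : ℕ, ∀ (v w : V) (hv : v ∈ Stmt7Aux.Bd Γ U) (hw : w ∈ Stmt7Aux.Bd Γ U),
        (Γ.induce U).dist ⟨v, hv.1⟩ ⟨w, hw.1⟩ ≤ K :=
    fun U hU => Stmt7Aux.exists_bound ⟨d, hd⟩ Λ hΛc hk hU
  set Kf : Set V → ℕ :=
    fun U => if h : IsCompOut Γ Λ.verts U then (hex U h).choose else 0 with hKf
  have hKf_spec : ∀ (U : Set V) (hU : IsCompOut Γ Λ.verts U),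
      ∀ (v w : V) (hv : v ∈ Stmt7Aux.Bd Γ U) (hw : w ∈ Stmt7Aux.Bd Γ U),
        (Γ.induce U).dist ⟨v, hv.1⟩ ⟨w, hw.1⟩ ≤ Kf U := by
    intro U hU
    have : Kf U = (hex U hU).choose := by rw [hKf]; simp [dif_pos hU]
    rw [this]
    exact (hex U hU).choose_spec
  -- components attached to a fixed vertex form a finite family
  have hCfin : ∀ w : V,
      {U : Set V | IsCompOut Γ Λ.verts U ∧ ∃ u ∈ U, Γ.Adj w u}.Finite := by
    intro w
    set C := {U : Set V | IsCompOut Γ Λ.verts U ∧ ∃ u ∈ U, Γ.Adj w u} with hC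
    set pick : Set V → V := fun U => if h : ∃ u ∈ U, Γ.Adj w u then h.choose else w
      with hpick
    have hpick_spec : ∀ U ∈ C, pick U ∈ U ∧ Γ.Adj w (pick U) := by
      intro U hU
      have h := hU.2
      have : pick U = h.choose := by rw [hpick]; simp [dif_pos h]
      rw [this]
      exact ⟨h.choose_spec.1, h.choose_spec.2⟩
    apply Set.Finite.of_finite_image (f := pick)
    · refine Set.Finite.subset (hd w).1 ?_
      rintro _ ⟨U, hU, rfl⟩
      exact (hpick_spec U hU).2
    · intro U hU U' hU' hpq
      exact Stmt7Aux.compOut_eq hU.1 hU'.1 (hpick_spec U hU).1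
        (hpq ▸ (hpick_spec U' hU').1)
  -- global bound
  have hSfin : (⋃ w ∈ F, Kf '' {U : Set V | IsCompOut Γ Λ.verts U ∧ ∃ u ∈ U, Γ.Adj w u}).Finite :=
    hFfin.biUnion fun w _ => (hCfin w).image Kf
  obtain ⟨K, hK⟩ := hSfin.bddAbove
  refine ⟨K, ?_⟩
  intro U hU W hW v w hv hw
  obtain ⟨hvU, u, huW, hadjv⟩ := hv
  obtain ⟨hwU, u', hu'W, hadjw⟩ := hw
  have hvBd : (v : V) ∈ Stmt7Aux.Bd Γ U :=
    ⟨hvU, u, Stmt7Aux.not_mem_of_mem_compOut hW huW, hadjv⟩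
  have hwBd : (w : V) ∈ Stmt7Aux.Bd Γ U :=
    ⟨hwU, u', Stmt7Aux.not_mem_of_mem_compOut hW hu'W, hadjw⟩
  -- find g moving U into a component attached to some element of F
  obtain ⟨hv₀U, u₀, hu₀, hadj₀⟩ := hvBd
  have hu₀Λ : u₀ ∈ Λ.verts := by
    by_contra h
    exact hu₀ (Stmt7Aux.mem_of_adj hU hv₀U hadj₀ h)
  obtain ⟨g, hg, w₀, hw₀F, hgw₀⟩ := hF u₀ hu₀Λ
  have hs : IsCompOut Γ Λ.verts {y | g • y ∈ U} := Stmt7Aux.compOut_smul hact hg hU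
  have hsC : {y | g • y ∈ U} ∈
      {U' : Set V | IsCompOut Γ Λ.verts U' ∧ ∃ u ∈ U', Γ.Adj w₀ u} := by
    refine ⟨hs, g⁻¹ • (v : V), by simpa using hv₀U, ?_⟩
    have h2 := hact g w₀ (g⁻¹ • (v : V))
    rw [smul_inv_smul, hgw₀] at h2
    exact h2.1 hadj₀.symm
  have hKfs : Kf {y | g • y ∈ U} ≤ K :=
    hK (Set.mem_biUnion hw₀F (Set.mem_image_of_mem Kf hsC))
  have hPU : ∀ (x y : V) (hx : x ∈ Stmt7Aux.Bd Γ U) (hy : y ∈ Stmt7Aux.Bd Γ U),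
      (Γ.induce U).dist ⟨x, hx.1⟩ ⟨y, hy.1⟩ ≤ K :=
    Stmt7Aux.bound_smul hact hg hU
      (fun a b ha hb => le_trans (hKf_spec _ hs a b ha hb) hKfs)
  exact hPU v w ⟨hvU, u, Stmt7Aux.not_mem_of_mem_compOut hW huW, hadjv⟩
    ⟨hwU, u', Stmt7Aux.not_mem_of_mem_compOut hW hu'W, hadjw⟩
end
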